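/- arXiv:2210.14289 — 4 statements merged into one kernel-verified Lean document; each statement's English description precedes it below -/
import Mathlib

section
/- Let f, g, h : ℝ² → ℝ be smooth functions of (v, w), and define the skew-symmetric matrix ω on ℝ³ (with coordinates u, v, w) by ω^{12} = f(v,w), ω^{13} = g(v,w), ω^{23} = h(v,w). Then ω satisfies the Jacobi identity ∑_s ( ω^{is} ∂_s ω^{jk} + ω^{js} ∂_s ω^{ki} + ω^{ks} ∂_s ω^{ij} ) = 0 for all i,j,k if and only if f ∂_v h − h ∂_v f + g ∂_w h − h ∂_w g = 0. -/
/-- Partial derivative of `F` in the direction of the `s`-th coordinate of `ℝ³`. -/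
noncomputable def pd3 (s : Fin 3) (F : (Fin 3 → ℝ) → ℝ) (x : Fin 3 → ℝ) : ℝ :=
  fderiv ℝ F x (Pi.single s 1)

noncomputable def L12 : (Fin 3 → ℝ) →L[ℝ] ℝ × ℝ :=
  (ContinuousLinearMap.proj (1 : Fin 3)).prod (ContinuousLinearMap.proj 2)

lemma pd3_lift (f : ℝ → ℝ → ℝ) (hf : ContDiff ℝ (⊤ : ℕ∞) fun p : ℝ × ℝ => f p.1 p.2)
    (s : Fin 3) (x : Fin 3 → ℝ) :
    pd3 s (fun y => f (y 1) (y 2)) x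
      = fderiv ℝ (fun p : ℝ × ℝ => f p.1 p.2) (x 1, x 2) ((Pi.single s (1:ℝ) : Fin 3 → ℝ) 1, (Pi.single s (1:ℝ) : Fin 3 → ℝ) 2) := by
  have h1 : HasFDerivAt (fun p : ℝ × ℝ => f p.1 p.2)
      (fderiv ℝ (fun p : ℝ × ℝ => f p.1 p.2) (L12 x)) (L12 x) :=
    (hf.differentiable (by simp) (L12 x)).hasFDerivAt
  have h2 : HasFDerivAt (fun y : Fin 3 → ℝ => f (y 1) (y 2))
      ((fderiv ℝ (fun p : ℝ × ℝ => f p.1 p.2) (L12 x)).comp L12) x :=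
    h1.comp x (L12.hasFDerivAt)
  have : pd3 s (fun y => f (y 1) (y 2)) x
      = ((fderiv ℝ (fun p : ℝ × ℝ => f p.1 p.2) (L12 x)).comp L12) (Pi.single s 1) := by
    unfold pd3
    rw [h2.fderiv]
  simpa [L12] using this

lemma pd3_neg (s : Fin 3) (x : Fin 3 → ℝ) (F : (Fin 3 → ℝ) → ℝ) :
    pd3 s (fun y => -F y) x = - pd3 s F x := by
  unfold pd3
  rw [fderiv_fun_neg]
  simp

lemma pd3_zero (s : Fin 3) (x : Fin 3 → ℝ) : pd3 s (fun _ => (0:ℝ)) x = 0 := by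
  unfold pd3; simp

lemma deriv_fst (f : ℝ → ℝ → ℝ) (hf : ContDiff ℝ (⊤ : ℕ∞) fun p : ℝ × ℝ => f p.1 p.2)
    (v w : ℝ) : deriv (fun v' => f v' w) v
      = fderiv ℝ (fun p : ℝ × ℝ => f p.1 p.2) (v, w) ((1:ℝ), (0:ℝ)) := by
  have h1 : HasFDerivAt (fun p : ℝ × ℝ => f p.1 p.2)
      (fderiv ℝ (fun p : ℝ × ℝ => f p.1 p.2) (v, w)) (v, w) :=
    (hf.differentiable (by simp) _).hasFDerivAt
  have h2 : HasDerivAt (fun v' : ℝ => (v', w)) ((1:ℝ), (0:ℝ)) v := by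
    have ha : HasDerivAt (fun v' : ℝ => v') 1 v := hasDerivAt_id v
    have hb : HasDerivAt (fun _ : ℝ => w) 0 v := hasDerivAt_const v w
    exact ha.prodMk hb
  exact (h1.comp_hasDerivAt v h2).deriv

lemma deriv_snd (f : ℝ → ℝ → ℝ) (hf : ContDiff ℝ (⊤ : ℕ∞) fun p : ℝ × ℝ => f p.1 p.2)
    (v w : ℝ) : deriv (fun w' => f v w') w
      = fderiv ℝ (fun p : ℝ × ℝ => f p.1 p.2) (v, w) ((0:ℝ), (1:ℝ)) := by
  have h1 : HasFDerivAt (fun p : ℝ × ℝ => f p.1 p.2)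
      (fderiv ℝ (fun p : ℝ × ℝ => f p.1 p.2) (v, w)) (v, w) :=
    (hf.differentiable (by simp) _).hasFDerivAt
  have h2 : HasDerivAt (fun w' : ℝ => (v, w')) ((0:ℝ), (1:ℝ)) w :=
    (hasDerivAt_const w v).prodMk (hasDerivAt_id w)
  exact (h1.comp_hasDerivAt w h2).deriv

lemma pd3_lift0 (f : ℝ → ℝ → ℝ) (hf : ContDiff ℝ (⊤ : ℕ∞) fun p : ℝ × ℝ => f p.1 p.2)
    (x : Fin 3 → ℝ) : pd3 0 (fun y => f (y 1) (y 2)) x = 0 := by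
  rw [pd3_lift f hf]
  have : ((Pi.single (0:Fin 3) (1:ℝ) : Fin 3 → ℝ) 1, (Pi.single (0:Fin 3) (1:ℝ) : Fin 3 → ℝ) 2)
      = ((0:ℝ), (0:ℝ)) := by
    simp [Pi.single_eq_of_ne]
  rw [this]
  have : ((0:ℝ), (0:ℝ)) = (0 : ℝ × ℝ) := rfl
  rw [this, map_zero]

lemma pd3_lift1 (f : ℝ → ℝ → ℝ) (hf : ContDiff ℝ (⊤ : ℕ∞) fun p : ℝ × ℝ => f p.1 p.2)
    (x : Fin 3 → ℝ) : pd3 1 (fun y => f (y 1) (y 2)) x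
      = fderiv ℝ (fun p : ℝ × ℝ => f p.1 p.2) (x 1, x 2) ((1:ℝ), (0:ℝ)) := by
  rw [pd3_lift f hf]
  congr 1

lemma pd3_lift2 (f : ℝ → ℝ → ℝ) (hf : ContDiff ℝ (⊤ : ℕ∞) fun p : ℝ × ℝ => f p.1 p.2)
    (x : Fin 3 → ℝ) : pd3 2 (fun y => f (y 1) (y 2)) x
      = fderiv ℝ (fun p : ℝ × ℝ => f p.1 p.2) (x 1, x 2) ((0:ℝ), (1:ℝ)) := by
  rw [pd3_lift f hf]
  congr 1


/-- For the skew-symmetric matrix `ω^{12} = f(v,w)`, `ω^{13} = g(v,w)`, `ω^{23} = h(v,w)`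
on `ℝ³` (coordinates `u, v, w`), the Jacobi identity holds for all indices if and only if
the closure condition `f ∂_v h − h ∂_v f + g ∂_w h − h ∂_w g = 0` holds. -/
theorem stmt2 (f g h : ℝ → ℝ → ℝ)
    (hf : ContDiff ℝ (⊤ : ℕ∞) fun p : ℝ × ℝ => f p.1 p.2)
    (hg : ContDiff ℝ (⊤ : ℕ∞) fun p : ℝ × ℝ => g p.1 p.2)
    (hh : ContDiff ℝ (⊤ : ℕ∞) fun p : ℝ × ℝ => h p.1 p.2) :
    (∀ (x : Fin 3 → ℝ) (i j k : Fin 3),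
      (fun (ω : (Fin 3 → ℝ) → Matrix (Fin 3) (Fin 3) ℝ) =>
        ∑ s : Fin 3,
          (ω x i s * pd3 s (fun y => ω y j k) x
            + ω x j s * pd3 s (fun y => ω y k i) x
            + ω x k s * pd3 s (fun y => ω y i j) x))
      (fun y => !![0, f (y 1) (y 2), g (y 1) (y 2);
                   -f (y 1) (y 2), 0, h (y 1) (y 2);
                   -g (y 1) (y 2), -h (y 1) (y 2), 0]) = 0)
    ↔ (∀ v w : ℝ,
        f v w * deriv (fun v' => h v' w) v - h v w * deriv (fun v' => f v' w) v
          + g v w * deriv (fun w' => h v w') w - h v w * deriv (fun w' => g v w') w = 0) := by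

  constructor
  · intro H v w
    have := H ![0, v, w] 0 1 2
    simp only [Fin.sum_univ_three, Matrix.cons_val_zero, Matrix.cons_val_one, Matrix.head_cons,
      Matrix.cons_val_two, Matrix.tail_cons, Matrix.of_apply, Matrix.cons_val',
      Matrix.empty_val', Matrix.cons_val_fin_one, Matrix.head_fin_const] at this
    simp only [pd3_neg, pd3_lift0 f hf, pd3_lift0 g hg, pd3_lift0 h hh,
      pd3_lift1 f hf, pd3_lift1 g hg, pd3_lift1 h hh,
      pd3_lift2 f hf, pd3_lift2 g hg, pd3_lift2 h hh] at this
    simp only [Matrix.cons_val_zero, Matrix.cons_val_one, Matrix.cons_val_two, Matrix.head_cons, Matrix.tail_cons] at this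
    rw [deriv_fst h hh, deriv_fst f hf, deriv_snd h hh, deriv_snd g hg]
    linarith
  · intro hc x i j k
    have hcx := hc (x 1) (x 2)
    rw [deriv_fst h hh, deriv_fst f hf, deriv_snd h hh, deriv_snd g hg] at hcx
    have htri : ∀ m : Fin 3, m = 0 ∨ m = 1 ∨ m = 2 := by decide
    rcases htri i with rfl | rfl | rfl <;> rcases htri j with rfl | rfl | rfl <;>
      rcases htri k with rfl | rfl | rfl <;>
      simp only [Fin.sum_univ_three, Matrix.cons_val_zero, Matrix.cons_val_one, Matrix.head_cons,
        Matrix.cons_val_two, Matrix.tail_cons, Matrix.of_apply, Matrix.cons_val',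
        Matrix.empty_val', Matrix.cons_val_fin_one, Matrix.head_fin_const,
        pd3_neg, pd3_zero, pd3_lift0 f hf, pd3_lift0 g hg, pd3_lift0 h hh,
        pd3_lift1 f hf, pd3_lift1 g hg, pd3_lift1 h hh,
        pd3_lift2 f hf, pd3_lift2 g hg, pd3_lift2 h hh] <;>
      linarith [hcx]
end

section
/- Let g, h : ℝ² → ℝ be smooth functions of (v,w) with h nowhere zero, let l : ℝ → ℝ be smooth, and define f(v,w) = h(v,w) · ( l(w) + ∫_1^v ( g(s,w) ∂_w h(s,w) − h(s,w) ∂_w g(s,w) ) / h(s,w)² ds ). Then f, g, h satisfy the closure condition f ∂_v h − h ∂_v f + g ∂_w h − h ∂_w g = 0 identically. -/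
/-- If `f(v,w) = h(v,w)·( l(w) + ∫_1^v (g ∂_w h − h ∂_w g)/h² ds )`, with `h` nowhere
zero, then `f, g, h` satisfy the closure condition
`f ∂_v h − h ∂_v f + g ∂_w h − h ∂_w g = 0` identically. -/
theorem stmt3 (g h : ℝ → ℝ → ℝ) (l : ℝ → ℝ)
    (hg : ContDiff ℝ (⊤ : ℕ∞) fun p : ℝ × ℝ => g p.1 p.2)
    (hh : ContDiff ℝ (⊤ : ℕ∞) fun p : ℝ × ℝ => h p.1 p.2)
    (hl : ContDiff ℝ (⊤ : ℕ∞) l)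
    (hne : ∀ v w, h v w ≠ 0)
    (f : ℝ → ℝ → ℝ)
    (hf : ∀ v w, f v w = h v w * (l w + ∫ s in (1:ℝ)..v,
        (g s w * deriv (fun w' => h s w') w - h s w * deriv (fun w' => g s w') w)
          / (h s w) ^ 2)) :
    ∀ v w : ℝ,
      f v w * deriv (fun v' => h v' w) v - h v w * deriv (fun v' => f v' w) v
        + g v w * deriv (fun w' => h v w') w - h v w * deriv (fun w' => g v w') w = 0 := by
  intro v w
  set H : ℝ × ℝ → ℝ := fun p => h p.1 p.2 with hH
  set G : ℝ × ℝ → ℝ := fun p => g p.1 p.2 with hG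
  -- partial derivatives in the second variable
  have hderH : ∀ s : ℝ, HasDerivAt (fun w' => h s w') (fderiv ℝ H (s, w) (0, 1)) w := by
    intro s
    have h1 : HasFDerivAt H (fderiv ℝ H (s, w)) (s, w) :=
      (hh.differentiable (by simp) (s, w)).hasFDerivAt
    have h2 : HasDerivAt (fun w' : ℝ => ((s, w') : ℝ × ℝ)) ((0 : ℝ), (1 : ℝ)) w :=
      HasDerivAt.prodMk (hasDerivAt_const w s) (hasDerivAt_id w)
    exact h1.comp_hasDerivAt w h2
  have hderG : ∀ s : ℝ, HasDerivAt (fun w' => g s w') (fderiv ℝ G (s, w) (0, 1)) w := by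
    intro s
    have h1 : HasFDerivAt G (fderiv ℝ G (s, w)) (s, w) :=
      (hg.differentiable (by simp) (s, w)).hasFDerivAt
    have h2 : HasDerivAt (fun w' : ℝ => ((s, w') : ℝ × ℝ)) ((0 : ℝ), (1 : ℝ)) w :=
      HasDerivAt.prodMk (hasDerivAt_const w s) (hasDerivAt_id w)
    exact h1.comp_hasDerivAt w h2
  -- the integrand
  set φ : ℝ → ℝ := fun s =>
    (g s w * deriv (fun w' => h s w') w - h s w * deriv (fun w' => g s w') w)
      / (h s w) ^ 2 with hφ
  have hφeq : φ = fun s =>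
      (g s w * fderiv ℝ H (s, w) (0, 1) - h s w * fderiv ℝ G (s, w) (0, 1))
        / (h s w) ^ 2 := by
    funext s
    simp [hφ, (hderH s).deriv, (hderG s).deriv]
  have hcg : Continuous fun s : ℝ => g s w :=
    hg.continuous.comp (continuous_id.prodMk continuous_const)
  have hch : Continuous fun s : ℝ => h s w :=
    hh.continuous.comp (continuous_id.prodMk continuous_const)
  have hcDH : Continuous fun s : ℝ => fderiv ℝ H (s, w) (0, 1) :=
    ((hh.continuous_fderiv (by simp)).comp
      (continuous_id.prodMk continuous_const)).clm_apply continuous_const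
  have hcDG : Continuous fun s : ℝ => fderiv ℝ G (s, w) (0, 1) :=
    ((hg.continuous_fderiv (by simp)).comp
      (continuous_id.prodMk continuous_const)).clm_apply continuous_const
  have hφc : Continuous φ := by
    rw [hφeq]
    exact ((hcg.mul hcDH).sub (hch.mul hcDG)).div (hch.pow 2)
      (fun s => pow_ne_zero _ (hne s w))
  -- derivative of the integral
  set F : ℝ → ℝ := fun u => ∫ s in (1:ℝ)..u, φ s with hF
  have hFd : HasDerivAt F (φ v) v := (hφc.integral_hasStrictDerivAt 1 v).hasDerivAt
  -- derivative of h in the first variable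
  have hderHv : HasDerivAt (fun v' => h v' w) (fderiv ℝ H (v, w) (1, 0)) v := by
    have h1 : HasFDerivAt H (fderiv ℝ H (v, w)) (v, w) :=
      (hh.differentiable (by simp) (v, w)).hasFDerivAt
    have h2 : HasDerivAt (fun v' : ℝ => ((v', w) : ℝ × ℝ)) ((1 : ℝ), (0 : ℝ)) v :=
      HasDerivAt.prodMk (hasDerivAt_id v) (hasDerivAt_const v w)
    exact h1.comp_hasDerivAt v h2
  -- derivative of f in the first variable
  have hfe : (fun v' => f v' w) = fun v' => h v' w * (l w + F v') := by
    funext v'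
    exact hf v' w
  have hfd : HasDerivAt (fun v' => f v' w)
      (fderiv ℝ H (v, w) (1, 0) * (l w + F v) + h v w * (0 + φ v)) v := by
    rw [hfe]
    exact hderHv.mul ((hasDerivAt_const v (l w)).add hFd)
  rw [hfd.deriv, hderHv.deriv, hf v w]
  show h v w * (l w + F v) * _ - _ + _ - _ = 0
  have hphiv : φ v =
      (g v w * deriv (fun w' => h v w') w - h v w * deriv (fun w' => g v w') w)
        / (h v w) ^ 2 := rfl
  rw [hphiv]
  field_simp [hne v w]
  ring
end

section
/- Let g = diag(1,0,0) on ℝ³, let b^{ij}_3 be the matrix with b^{12}_3 = 1, b^{21}_3 = -1 and all other entries zero, and b^{ij}_1 = b^{ij}_2 = 0. Let ω be smooth and skew-symmetric with Φ^{ijk} = g^{is} ∂_s ω^{jk} − b^{ij}_s ω^{sk} − b^{ik}_s ω^{js}. If Φ^{ijk} = Φ^{kij} holds for all i, j, k ∈ {1,2,3}, then ω^{23} = 0, ∂_1 ω^{13} = 0, and ∂_1 ω^{12} = ω^{13}. -/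
/-- The degenerate metric `g = diag(1,0,0)`. -/
noncomputable def gdeg : Matrix (Fin 3) (Fin 3) ℝ := !![1, 0, 0; 0, 0, 0; 0, 0, 0]

/-- The coefficients `b^{ij}_k` of the operator `C_{3,3}`: `b^{ij}_1 = b^{ij}_2 = 0`,
`b^{12}_3 = 1`, `b^{21}_3 = -1`, all other entries zero. `bC k i j` is `b^{ij}_k`. -/
noncomputable def bC : Fin 3 → Matrix (Fin 3) (Fin 3) ℝ
  | 2 => !![0, 1, 0; -1, 0, 0; 0, 0, 0]
  | _ => 0

/-- For `g = diag(1,0,0)` and the `b`-coefficients of `C_{3,3}`, the symmetry condition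
`Φ^{ijk} = Φ^{kij}` on `Φ^{ijk} = g^{is} ∂_s ω^{jk} − b^{ij}_s ω^{sk} − b^{ik}_s ω^{js}`
forces `ω^{23} = 0`, `∂_1 ω^{13} = 0` and `∂_1 ω^{12} = ω^{13}`. -/
theorem stmt13 (ω : (Fin 3 → ℝ) → Matrix (Fin 3) (Fin 3) ℝ)
    (hsmooth : ∀ i j, ContDiff ℝ (⊤ : ℕ∞) fun x => ω x i j)
    (hskew : ∀ x i j, ω x i j = - ω x j i)
    (Φ : Fin 3 → Fin 3 → Fin 3 → (Fin 3 → ℝ) → ℝ)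
    (hΦ : ∀ i j k x, Φ i j k x = ∑ s : Fin 3,
      (gdeg i s * pd3 s (fun y => ω y j k) x - bC s i j * ω x s k - bC s i k * ω x j s))
    (hsym : ∀ i j k : Fin 3, ∀ x, Φ i j k x = Φ k i j x) :
    ∀ x : Fin 3 → ℝ,
      ω x 1 2 = 0 ∧
      pd3 0 (fun y => ω y 0 2) x = 0 ∧
      pd3 0 (fun y => ω y 0 1) x = ω x 0 2 := by
  intro x
  have hb0 : bC 0 = 0 := rfl
  have hb1 : bC 1 = 0 := rfl
  have hb2 : bC 2 = !![0, 1, 0; -1, 0, 0; 0, 0, 0] := rfl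
  have hzz : ∀ a, ω x a a = 0 := fun a => by have := hskew x a a; linarith
  have h21 : ω x 2 1 = - ω x 1 2 := hskew x 2 1
  have h20 : ω x 2 0 = - ω x 0 2 := hskew x 2 0
  have h1 := hsym 1 0 1 x
  have h2 := hsym 0 0 2 x
  have h3 := hsym 0 0 1 x
  rw [hΦ, hΦ] at h1 h2 h3
  simp only [Fin.sum_univ_three, gdeg, bC, hb0, hb1, hb2, Matrix.cons_val_zero,
    Matrix.cons_val_one, Matrix.head_cons, Matrix.cons_val_two, Matrix.tail_cons,
    Matrix.head_fin_const, Matrix.of_apply, Matrix.cons_val', Matrix.empty_val',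
    Matrix.cons_val_fin_one, Matrix.zero_apply, Pi.zero_apply] at h1 h2 h3
  simp only [hzz, h21, h20] at h1 h2 h3
  refine ⟨by linarith, by linarith, by linarith⟩
end

section
/- Let f, g : ℝ → ℝ be smooth and c ∈ ℝ. Define on ℝ³ (coordinates u, v, w) the skew-symmetric matrix ω^{12} = f(w), ω^{13} = c·g(w), ω^{23} = g(w). Then ω satisfies the Jacobi identity ∑_s ( ω^{is} ∂_s ω^{jk} + ω^{js} ∂_s ω^{ki} + ω^{ks} ∂_s ω^{ij} ) = 0 for all i, j, k ∈ {1,2,3}. -/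
lemma pd3_comp (h : ℝ → ℝ) (hh : Differentiable ℝ h) (s : Fin 3) (x : Fin 3 → ℝ) :
    pd3 s (fun y => h (y 2)) x = if s = 2 then deriv h (x 2) else 0 := by
  have hproj : HasFDerivAt (fun y : Fin 3 → ℝ => y 2)
      (ContinuousLinearMap.proj (R := ℝ) (φ := fun _ : Fin 3 => ℝ) 2) x :=
    (ContinuousLinearMap.proj (R := ℝ) (φ := fun _ : Fin 3 => ℝ) 2).hasFDerivAt
  have := (hh (x 2)).hasDerivAt.comp_hasFDerivAt x hproj
  unfold pd3
  rw [show (fun y : Fin 3 → ℝ => h (y 2)) = h ∘ fun y => y 2 from rfl, this.fderiv]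
  simp [ContinuousLinearMap.proj, Pi.single_apply]
  by_cases hs : s = 2 <;> simp [hs, eq_comm]

/-- The ultralocal part of the operator `C_{3,9}`: `ω^{12} = f(w)`, `ω^{13} = c·g(w)`,
`ω^{23} = g(w)`, extended by skew-symmetry, satisfies the Jacobi identity. -/
theorem stmt15 (f g : ℝ → ℝ) (hf : ContDiff ℝ (⊤ : ℕ∞) f) (hg : ContDiff ℝ (⊤ : ℕ∞) g) (c : ℝ) :
    ∀ (x : Fin 3 → ℝ) (i j k : Fin 3),
      (fun (ω : (Fin 3 → ℝ) → Matrix (Fin 3) (Fin 3) ℝ) =>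
        ∑ s : Fin 3,
          (ω x i s * pd3 s (fun y => ω y j k) x
            + ω x j s * pd3 s (fun y => ω y k i) x
            + ω x k s * pd3 s (fun y => ω y i j) x))
      (fun y => !![0, f (y 2), c * g (y 2);
                   -f (y 2), 0, g (y 2);
                   -(c * g (y 2)), -g (y 2), 0]) = 0 := by
  intro x i j k
  have hfd := hf.differentiable (by simp)
  have hgd := hg.differentiable (by simp)
  have h1 : ∀ s x, pd3 s (fun y => f (y 2)) x = if s = 2 then deriv f (x 2) else 0 :=
    pd3_comp f hfd
  have h2 : ∀ s x, pd3 s (fun y => -f (y 2)) x = if s = 2 then -deriv f (x 2) else 0 := by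
    intro s x
    rw [pd3_comp (fun t => -f t) hfd.neg s x]
    simp
  have h3 : ∀ s x, pd3 s (fun y => g (y 2)) x = if s = 2 then deriv g (x 2) else 0 :=
    pd3_comp g hgd
  have h4 : ∀ s x, pd3 s (fun y => -g (y 2)) x = if s = 2 then -deriv g (x 2) else 0 := by
    intro s x
    rw [pd3_comp (fun t => -g t) hgd.neg s x]
    simp
  have h5 : ∀ s x, pd3 s (fun y => c * g (y 2)) x = if s = 2 then c * deriv g (x 2) else 0 := by
    intro s x
    rw [pd3_comp (fun t => c * g t) (hgd.const_mul c) s x]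
    rw [deriv_const_mul _ (hgd _)]
  have h6 : ∀ s x, pd3 s (fun y => -(c * g (y 2))) x
      = if s = 2 then -(c * deriv g (x 2)) else 0 := by
    intro s x
    rw [pd3_comp (fun t => -(c * g t)) (hgd.const_mul c).neg s x]
    have : (fun t => -(c * g t)) = fun t => (-c) * g t := by funext t; ring
    rw [this, deriv_const_mul _ (hgd _)]
    split <;> ring
  fin_cases i <;> fin_cases j <;> fin_cases k <;>
    simp [Fin.sum_univ_three, Matrix.cons_val_zero, Matrix.cons_val_one, Matrix.head_cons,
      h1, h2, h3, h4, h5, h6, pd3_zero] <;> ring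
end
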